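/- Soundness of the abstract pushdown CESK machine: if ς ↦ ς' in the concrete CEK machine and α(ς) ⊑ ŝ, then there exists ŝ' with ŝ ↦ ŝ' in the abstract pushdown CESK machine and α(ς') ⊑ ŝ', where the continuation components of ς and ŝ have exactly corresponding frame structure (the stack is not abstracted). -/

import Mathlib

/- Statement 14: soundness of the abstract pushdown CESK machine with
   respect to the concrete CEK machine; the continuation components have
   exactly corresponding frame structure (the stack is not abstracted). -/

inductive Exp : Type
  | ref : String → Exp
  | lam : String → Exp → Exp
  | app : Exp → Exp → Exp
deriving DecidableEq

/- The concrete CEK machine. -/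

mutual
  inductive CEnv : Type
    | mk : List (String × CClo) → CEnv
  inductive CClo : Type
    | mk : Exp → CEnv → CClo
end

def CEnv.lookup : CEnv → String → Option CClo
  | .mk l, x => l.lookup x

def CEnv.ext : CEnv → String → CClo → CEnv
  | .mk l, x, c => .mk ((x, c) :: l)

inductive CKont : Type
  | mt
  | ar (e : Exp) (ρ : CEnv) (κ : CKont)
  | fn (v : Exp) (ρ : CEnv) (κ : CKont)

abbrev CEKState := Exp × CEnv × CKont

inductive CEKStep : CEKState → CEKState → Prop
  | var {x ρ κ v ρ'} :
      CEnv.lookup ρ x = some (CClo.mk v ρ') →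
      CEKStep (.ref x, ρ, κ) (v, ρ', κ)
  | app {e₀ e₁ ρ κ} :
      CEKStep (.app e₀ e₁, ρ, κ) (e₀, ρ, .ar e₁ ρ κ)
  | arg {x e ρ e' ρ' κ} :
      CEKStep (.lam x e, ρ, .ar e' ρ' κ) (e', ρ', .fn (.lam x e) ρ κ)
  | beta {x e ρ y e' ρ' κ} :
      CEKStep (.lam x e, ρ, .fn (.lam y e') ρ' κ)
        (e', CEnv.ext ρ' y (CClo.mk (.lam x e) ρ), κ)

/- The abstract pushdown CESK machine: bindings are store-allocated into a
   finite abstract store, continuations remain an unbounded inductive stack. -/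

section Abstract

variable (AAddr : Type)

abbrev AEnv := List (String × AAddr)
abbrev AClo := Exp × AEnv AAddr

/-- Abstract stores map addresses to sets of closures. -/
abbrev AStore := AAddr → Set (AClo AAddr)

inductive AKont : Type
  | mt
  | ar (e : Exp) (ρ : AEnv AAddr) (κ : AKont)
  | fn (v : Exp) (ρ : AEnv AAddr) (κ : AKont)

abbrev AState := Exp × AEnv AAddr × AStore AAddr × AKont AAddr

end Abstract

def joinStore {AAddr : Type} [DecidableEq AAddr]
    (σ : AStore AAddr) (a : AAddr) (c : AClo AAddr) : AStore AAddr :=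
  fun b => if b = a then insert c (σ b) else σ b

inductive AStep {AAddr : Type} [DecidableEq AAddr]
    (aalloc : AState AAddr → AAddr) : AState AAddr → AState AAddr → Prop
  | var {x ρ σ κ a v ρ'} :
      List.lookup x ρ = some a → (v, ρ') ∈ σ a →
      AStep aalloc (.ref x, ρ, σ, κ) (v, ρ', σ, κ)
  | app {e₀ e₁ ρ σ κ} :
      AStep aalloc (.app e₀ e₁, ρ, σ, κ) (e₀, ρ, σ, .ar e₁ ρ κ)
  | arg {x e ρ σ e' ρ' κ} :
      AStep aalloc (.lam x e, ρ, σ, .ar e' ρ' κ)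
        (e', ρ', σ, .fn (.lam x e) ρ κ)
  | beta {x e ρ σ y e' ρ' κ} :
      AStep aalloc (.lam x e, ρ, σ, .fn (.lam y e') ρ' κ)
        (e', (y, aalloc (.lam x e, ρ, σ, .fn (.lam y e') ρ' κ)) :: ρ',
         joinStore σ (aalloc (.lam x e, ρ, σ, .fn (.lam y e') ρ' κ))
           (Exp.lam x e, ρ),
         κ)

/- The abstraction: CEK substitution-environments map through the
   binding-store abstraction; continuations map frame-by-frame. -/

mutual
  /-- α(ρ) ⊑-approximated by ρ̂ relative to the abstract store. -/
  inductive EnvAbs {AAddr : Type} (σ : AStore AAddr) : CEnv → AEnv AAddr → Prop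
    | nil : EnvAbs σ (.mk []) []
    | cons {x c l ρA v ρA' a} :
        CloAbs σ c (v, ρA') → (v, ρA') ∈ σ a →
        EnvAbs σ (.mk l) ρA →
        EnvAbs σ (.mk ((x, c) :: l)) ((x, a) :: ρA)
  /-- α of a closure relative to the abstract store. -/
  inductive CloAbs {AAddr : Type} (σ : AStore AAddr) : CClo → AClo AAddr → Prop
    | mk {v ρ ρA} : EnvAbs σ ρ ρA → CloAbs σ (.mk v ρ) (v, ρA)
end

/-- Continuations correspond frame-by-frame: the stack is not abstracted. -/
inductive KontAbs {AAddr : Type} (σ : AStore AAddr) : CKont → AKont AAddr → Prop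
  | mt : KontAbs σ .mt .mt
  | ar {e ρ ρA κ κA} :
      EnvAbs σ ρ ρA → KontAbs σ κ κA →
      KontAbs σ (.ar e ρ κ) (.ar e ρA κA)
  | fn {v ρ ρA κ κA} :
      EnvAbs σ ρ ρA → KontAbs σ κ κA →
      KontAbs σ (.fn v ρ κ) (.fn v ρA κA)

/-- `Approx ς ŝ` : α(ς) ⊑ ŝ. -/
def Approx {AAddr : Type} : CEKState → AState AAddr → Prop
  | (e, ρ, κ), (e', ρA, σ, κA) =>
      e = e' ∧ EnvAbs σ ρ ρA ∧ KontAbs σ κ κA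


/-! The abstraction relation is monotone in the abstract store, and the only rule that changes
the store, β, merely enlarges it by a join. Hence each concrete rule is matched by the abstract
rule of the same name: a variable lookup succeeds in the abstract environment at an address whose
store entry contains an approximation of the concrete closure, and after β the fresh binding is
approximated at the allocated address, whatever address `aalloc` picks. -/

section Monotone

variable {AAddr : Type} {σ σ' : AStore AAddr}

theorem EnvAbs.mono (h : ∀ a, σ a ⊆ σ' a) {ρ : CEnv} {ρA : AEnv AAddr}
    (hρ : EnvAbs σ ρ ρA) : EnvAbs σ' ρ ρA :=
  EnvAbs.rec (motive_1 := fun ρ ρA _ => EnvAbs σ' ρ ρA)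
    (motive_2 := fun c cA _ => CloAbs σ' c cA)
    .nil (fun _ hmem _ ihc ihρ => .cons ihc (h _ hmem) ihρ) (fun _ ihρ => .mk ihρ) hρ

theorem KontAbs.mono (h : ∀ a, σ a ⊆ σ' a) {κ : CKont} {κA : AKont AAddr}
    (hκ : KontAbs σ κ κA) : KontAbs σ' κ κA := by
  induction hκ with
  | mt => exact .mt
  | ar hρ _ ih => exact .ar (hρ.mono h) ih
  | fn hρ _ ih => exact .fn (hρ.mono h) ih

end Monotone

section JoinStore

variable {AAddr : Type} [DecidableEq AAddr] (σ : AStore AAddr) (a : AAddr) (c : AClo AAddr)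

theorem subset_joinStore (b : AAddr) : σ b ⊆ joinStore σ a c b := by
  unfold joinStore
  split_ifs
  exacts [Set.subset_insert c (σ b), subset_rfl]

theorem mem_joinStore_self : c ∈ joinStore σ a c a := by
  simp [joinStore]

end JoinStore

theorem EnvAbs.exists_lookup {AAddr : Type} {σ : AStore AAddr} {ρ : CEnv} {ρA : AEnv AAddr}
    {x : String} {c : CClo} (hρ : EnvAbs σ ρ ρA) (hx : CEnv.lookup ρ x = some c) :
    ∃ a cA, List.lookup x ρA = some a ∧ cA ∈ σ a ∧ CloAbs σ c cA := by
  induction ρA generalizing ρ with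
  | nil =>
    cases hρ
    simp [CEnv.lookup] at hx
  | cons _ ρA ih =>
    obtain _ | @⟨y, _, _, _, _, _, a, hc, hmem, hρ⟩ := hρ
    by_cases hxy : x = y
    · subst hxy
      simp only [CEnv.lookup, List.lookup, beq_self_eq_true, Option.some.injEq] at hx ⊢
      exact ⟨a, _, rfl, hmem, hx ▸ hc⟩
    · simp only [CEnv.lookup, List.lookup, beq_false_of_ne hxy] at hx ⊢
      exact ih hρ hx

theorem EnvAbs.ext_joinStore {AAddr : Type} [DecidableEq AAddr] {σ : AStore AAddr}
    {ρ ρ' : CEnv} {ρA ρA' : AEnv AAddr} (hρ : EnvAbs σ ρ ρA) (hρ' : EnvAbs σ ρ' ρA')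
    (y : String) (v : Exp) (a : AAddr) :
    EnvAbs (joinStore σ a (v, ρA)) (CEnv.ext ρ' y (CClo.mk v ρ)) ((y, a) :: ρA') := by
  obtain ⟨l⟩ := ρ'
  have hsub := subset_joinStore σ a (v, ρA)
  exact .cons (.mk (hρ.mono hsub)) (mem_joinStore_self σ a _) (hρ'.mono hsub)

theorem pushdown_cesk_sound {AAddr : Type} [DecidableEq AAddr]
    (aalloc : AState AAddr → AAddr)
    (ς ς' : CEKState) (sh : AState AAddr)
    (hstep : CEKStep ς ς') (happrox : Approx ς sh) :
    ∃ sh' : AState AAddr, AStep aalloc sh sh' ∧ Approx ς' sh' := by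
  obtain ⟨_, ρA, σ, κA⟩ := sh
  obtain ⟨rfl, hρ, hκ⟩ := happrox
  cases hstep with
  | var hx =>
    obtain ⟨a, _, ha, hmem, ⟨hρ'⟩⟩ := hρ.exists_lookup hx
    exact ⟨_, .var ha hmem, rfl, hρ', hκ⟩
  | app => exact ⟨_, .app, rfl, hρ, .ar hρ hκ⟩
  | arg =>
    obtain _ | ⟨hρ', hκ'⟩ := hκ
    exact ⟨_, .arg, rfl, hρ', .fn hρ hκ'⟩
  | beta =>
    obtain _ | _ | ⟨hρ', hκ'⟩ := hκ
    exact ⟨_, .beta, rfl, hρ.ext_joinStore hρ' _ _ _, hκ'.mono (subset_joinStore σ _ _)⟩
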